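/- Let k be a field, n ≥ 1, f a permutation of {1,…,n}, A = A(k,X,r_f), and A⁺ the two-sided ideal of A generated by x₁,…,x_n. The left annihilator Ann_A(A⁺) coincides with the set of nilpotent elements of A; every element a ∈ Ann_A(A⁺) satisfies a² = 0, and the product of any two elements of Ann_A(A⁺) is zero (so Ann_A(A⁺) is a two-sided ideal with Ann_A(A⁺)² = 0). In particular every nil one-sided ideal of A is contained in Ann_A(A⁺), and the Jacobson radical of A equals Ann_A(A⁺) and is nilpotent. -/

import Mathlib

/-!
Sending every generator to `X` gives a surjection `E : A → k[X]`. Since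
`x_j x_i = x_{f i} x_i = x_i x_i`, a word of length `m` ending in `x_i` equals `x_i ^ m`, so
`a x_i = E(a)(x_i) x_i`; applying `E` shows that `a x_i = 0` forces `E a = 0`. Conversely, if
`E a = 0` then `a b = ε(b) a`, where `ε(b)` is the constant coefficient of `E b`, which vanishes
on `A⁺`. Hence `Ann_A(A⁺) = ker E`, an ideal of square-zero elements. Being nil, it lies in the
Jacobson radical; and since `k[X]` has zero Jacobson radical, the Jacobson radical of `A` lies in
`ker E`.
-/

noncomputable section

open FreeAlgebra

/-- The defining relations of the Yang–Baxter algebra of the permutation idempotent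
solution `r_f(x,y) = (f(y), y)`. -/
def ybRel (k : Type*) [Field k] (n : ℕ) (f : Equiv.Perm (Fin n)) :
    FreeAlgebra k (Fin n) → FreeAlgebra k (Fin n) → Prop :=
  fun a b => ∃ j p : Fin n, a = ι k j * ι k p ∧ b = ι k (f p) * ι k p

/-- The Yang–Baxter algebra `A(k, X, r_f)`. -/
abbrev YBA (k : Type*) [Field k] (n : ℕ) (f : Equiv.Perm (Fin n)) :=
  RingQuot (ybRel k n f)

/-- The image of the generator `x_i` in `A(k, X, r_f)`. -/
def xgen (k : Type*) [Field k] (n : ℕ) (f : Equiv.Perm (Fin n)) (i : Fin n) :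
    YBA k n f :=
  RingQuot.mkAlgHom k (ybRel k n f) (ι k i)

/-- The augmentation ideal `A⁺`, the two-sided ideal generated by `x₁, …, xₙ`. -/
def Aplus (k : Type*) [Field k] (n : ℕ) (f : Equiv.Perm (Fin n)) :
    TwoSidedIdeal (YBA k n f) :=
  TwoSidedIdeal.span (Set.range (xgen k n f))

/-- The left annihilator of `A⁺` in `A`. -/
def lAnn (k : Type*) [Field k] (n : ℕ) (f : Equiv.Perm (Fin n)) : Set (YBA k n f) :=
  {a : YBA k n f | ∀ b ∈ Aplus k n f, a * b = 0}

open Polynomial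

theorem Ideal.le_jacobson_bot_of_isNilpotent {R : Type*} [Ring R] {I : Ideal R}
    (hI : ∀ x ∈ I, IsNilpotent x) : I ≤ Ideal.jacobson ⊥ := by
  intro x hx
  refine Ideal.mem_jacobson_iff.2 fun y => ?_
  obtain ⟨u, hu⟩ := (hI _ (I.mul_mem_left y hx)).isUnit_add_one
  refine ⟨↑u⁻¹, ?_⟩
  rw [mul_assoc, ← mul_add_one, ← hu, Units.inv_mul, sub_self]
  exact Ideal.zero_mem ⊥

theorem Ideal.jacobson_bot_le_ker_of_surjective {R S : Type*} [Ring R] [Ring S] {g : R →+* S}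
    (hg : Function.Surjective g) (hS : Ideal.jacobson (⊥ : Ideal S) = ⊥) :
    Ideal.jacobson ⊥ ≤ RingHom.ker g := by
  calc Ideal.jacobson ⊥ ≤ (Ideal.comap g ⊥).jacobson := Ideal.jacobson_mono bot_le
    _ = RingHom.ker g := by rw [← Ideal.comap_jacobson_of_surjective hg, hS]; rfl

namespace YBA

variable {k : Type*} [Field k] {n : ℕ} {f : Equiv.Perm (Fin n)}

@[elab_as_elim]
theorem induction {motive : YBA k n f → Prop} (a : YBA k n f)
    (algebraMap : ∀ r : k, motive (algebraMap k _ r))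
    (xgen : ∀ i, motive (xgen k n f i))
    (add : ∀ a b, motive a → motive b → motive (a + b))
    (mul : ∀ a b, motive a → motive b → motive (a * b)) : motive a := by
  obtain ⟨a, rfl⟩ := RingQuot.mkAlgHom_surjective k (ybRel k n f) a
  induction a using FreeAlgebra.induction with
  | grade0 r => simpa only [AlgHom.commutes] using algebraMap r
  | grade1 i => exact xgen i
  | mul a b ha hb => simpa only [map_mul] using mul _ _ ha hb
  | add a b ha hb => simpa only [map_add] using add _ _ ha hb

theorem xgen_mul_xgen (j p : Fin n) :
    xgen k n f j * xgen k n f p = xgen k n f (f p) * xgen k n f p := by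
  simp only [xgen, ← map_mul]
  exact RingQuot.mkAlgHom_rel k ⟨j, p, rfl, rfl⟩

theorem xgen_mul_xgen_eq_mul_self (j p : Fin n) :
    xgen k n f j * xgen k n f p = xgen k n f p * xgen k n f p :=
  (xgen_mul_xgen j p).trans (xgen_mul_xgen p p).symm

variable (k n f) in
def toPolynomial : YBA k n f →ₐ[k] k[X] :=
  RingQuot.liftAlgHom k ⟨FreeAlgebra.lift k fun _ => X, by
    rintro _ _ ⟨j, p, rfl, rfl⟩
    simp only [map_mul, FreeAlgebra.lift_ι_apply]⟩

@[simp]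
theorem toPolynomial_xgen (i : Fin n) : toPolynomial k n f (xgen k n f i) = X := by
  rw [xgen, toPolynomial, RingQuot.liftAlgHom_mkAlgHom_apply, FreeAlgebra.lift_ι_apply]

theorem toPolynomial_surjective [NeZero n] : Function.Surjective (toPolynomial k n f) :=
  fun p => ⟨aeval (xgen k n f 0) p, by
    rw [← aeval_algHom_apply, toPolynomial_xgen, aeval_X_left_apply]⟩

theorem mul_xgen (a : YBA k n f) (i : Fin n) :
    a * xgen k n f i = aeval (xgen k n f i) (toPolynomial k n f a) * xgen k n f i := by
  induction a using YBA.induction with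
  | algebraMap r => rw [AlgHom.commutes, AlgHom.commutes]
  | xgen j => rw [toPolynomial_xgen, aeval_X, xgen_mul_xgen_eq_mul_self]
  | add a b ha hb => rw [add_mul, ha, hb, map_add, map_add, add_mul]
  | mul a b ha hb =>
    have hcomm : Commute (xgen k n f i) (aeval (xgen k n f i) (toPolynomial k n f b)) :=
      Algebra.commute_of_mem_adjoin_singleton_of_commute (aeval_mem_adjoin_singleton k _)
        (Commute.refl _)
    rw [mul_assoc, hb, ← hcomm.eq, ← mul_assoc, ha, map_mul, map_mul, mul_assoc, mul_assoc,
      hcomm.eq]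

theorem mul_eq_smul_of_toPolynomial_eq_zero {a : YBA k n f} (ha : toPolynomial k n f a = 0)
    (b : YBA k n f) : a * b = constantCoeff (toPolynomial k n f b) • a := by
  induction b using YBA.induction with
  | algebraMap r =>
    rw [AlgHom.commutes, ← Algebra.commutes, ← Algebra.smul_def, constantCoeff_apply,
      algebraMap_eq, coeff_C_zero]
  | xgen i =>
    rw [mul_xgen, ha, map_zero, zero_mul, toPolynomial_xgen, constantCoeff_apply, coeff_X_zero,
      zero_smul]
  | add b c hb hc => rw [mul_add, hb, hc, map_add, map_add, add_smul]
  | mul b c hb hc => rw [← mul_assoc, hb, smul_mul_assoc, hc, smul_smul, map_mul, map_mul]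

theorem constantCoeff_toPolynomial_of_mem_Aplus {b : YBA k n f} (hb : b ∈ Aplus k n f) :
    constantCoeff (toPolynomial k n f b) = 0 := by
  set ε := (constantCoeff : k[X] →+* k).comp (toPolynomial k n f : YBA k n f →+* k[X])
  have hle : Aplus k n f ≤ TwoSidedIdeal.ker ε := by
    refine TwoSidedIdeal.span_le.2 ?_
    rintro _ ⟨i, rfl⟩
    simp [ε, TwoSidedIdeal.mem_ker]
  exact (TwoSidedIdeal.mem_ker ε).1 (hle hb)

theorem mem_lAnn_iff [NeZero n] {a : YBA k n f} :
    a ∈ lAnn k n f ↔ toPolynomial k n f a = 0 := by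
  refine ⟨fun ha => ?_, fun ha b hb => ?_⟩
  · have h := congrArg (toPolynomial k n f)
      (ha _ (TwoSidedIdeal.subset_span (Set.mem_range_self 0)))
    rwa [mul_xgen, map_mul, ← aeval_algHom_apply, toPolynomial_xgen, aeval_X_left_apply,
      map_zero, mul_eq_zero, or_iff_left X_ne_zero] at h
  · rw [mul_eq_smul_of_toPolynomial_eq_zero ha, constantCoeff_toPolynomial_of_mem_Aplus hb,
      zero_smul]

theorem mul_eq_zero_of_mem_lAnn [NeZero n] {a b : YBA k n f} (ha : a ∈ lAnn k n f)
    (hb : b ∈ lAnn k n f) : a * b = 0 := by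
  rw [mem_lAnn_iff] at ha hb
  rw [mul_eq_smul_of_toPolynomial_eq_zero ha, hb, map_zero, zero_smul]

theorem mem_lAnn_iff_isNilpotent [NeZero n] {a : YBA k n f} :
    a ∈ lAnn k n f ↔ IsNilpotent a :=
  ⟨fun ha => ⟨2, by rw [sq, mul_eq_zero_of_mem_lAnn ha ha]⟩,
    fun ha => mem_lAnn_iff.2 (ha.map (toPolynomial k n f)).eq_zero⟩

theorem coe_ker_toPolynomial [NeZero n] :
    (RingHom.ker (toPolynomial k n f) : Set (YBA k n f)) = lAnn k n f :=
  Set.ext fun _ => mem_lAnn_iff.symm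

theorem jacobson_bot_eq_ker [NeZero n] :
    Ideal.jacobson ⊥ = RingHom.ker (toPolynomial k n f) :=
  le_antisymm
    (Ideal.jacobson_bot_le_ker_of_surjective (g := (toPolynomial k n f : YBA k n f →+* k[X]))
      toPolynomial_surjective (IsJacobsonRing.out' _ Ideal.isRadical_bot))
    (Ideal.le_jacobson_bot_of_isNilpotent fun _ ha =>
      mem_lAnn_iff_isNilpotent.1 (mem_lAnn_iff.2 ha))

end YBA

/-- `Ann_A(A⁺)` is exactly the set of nilpotent elements of `A`;
every element of it squares to zero and the product of any two of its elements is
zero; every nil one-sided ideal (indeed every set of nilpotents) is contained in it;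
and the Jacobson radical of `A` equals `Ann_A(A⁺)` and is nilpotent. -/
theorem stmt_16 (k : Type*) [Field k] (n : ℕ) [NeZero n] (f : Equiv.Perm (Fin n)) :
    lAnn k n f = {a : YBA k n f | IsNilpotent a} ∧
    (∀ a ∈ lAnn k n f, a * a = 0) ∧
    (∀ a ∈ lAnn k n f, ∀ b ∈ lAnn k n f, a * b = 0) ∧
    (∀ s : Set (YBA k n f), (∀ a ∈ s, IsNilpotent a) → s ⊆ lAnn k n f) ∧
    (((Ideal.jacobson (⊥ : Ideal (YBA k n f))) : Set (YBA k n f)) = lAnn k n f) ∧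
    (∃ m : ℕ, 0 < m ∧ ∀ g : Fin m → YBA k n f,
      (∀ i, g i ∈ Ideal.jacobson (⊥ : Ideal (YBA k n f))) → (List.ofFn g).prod = 0) := by
  have hJ : ((Ideal.jacobson (⊥ : Ideal (YBA k n f))) : Set (YBA k n f)) = lAnn k n f := by
    rw [YBA.jacobson_bot_eq_ker, YBA.coe_ker_toPolynomial]
  refine ⟨Set.ext fun _ => YBA.mem_lAnn_iff_isNilpotent,
    fun a ha => YBA.mul_eq_zero_of_mem_lAnn ha ha,
    fun a ha b hb => YBA.mul_eq_zero_of_mem_lAnn ha hb,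
    fun s hs a ha => YBA.mem_lAnn_iff_isNilpotent.2 (hs a ha),
    hJ, 2, two_pos, fun g hg => ?_⟩
  have hmem : ∀ i, g i ∈ lAnn k n f := fun i => hJ ▸ hg i
  simpa using YBA.mul_eq_zero_of_mem_lAnn (hmem 0) (hmem 1)

end
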